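/- Let G be a group, H_1, ..., H_n subgroups of H where H is a normal finite-index subgroup of G which is product separable, and let g_1, ..., g_n ∈ G. Then the set S = g_1 H_1 g_2 H_2 ⋯ g_n H_n is closed in the profinite topology on G, provided each H_i is finitely generated. -/

import Mathlib

/-- The profinite topology on a group `G`: generated by cosets of finite-index subgroups. -/
def profiniteTopology (G : Type*) [Group G] : TopologicalSpace G :=
  TopologicalSpace.generateFrom
    {S : Set G | ∃ (H : Subgroup G) (g : G), H.FiniteIndex ∧ S = (g * ·) '' (H : Set G)}

/-- A group is product separable if every product of finitely many finitely generated
subgroups is closed in the profinite topology. -/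
def ProductSeparable (G : Type*) [Group G] : Prop :=
  ∀ (n : ℕ) (H : Fin n → Subgroup G), (∀ i, (H i).FG) →
    @IsClosed G (profiniteTopology G)
      {x : G | ∃ f : Fin n → G, (∀ i, f i ∈ H i) ∧ x = (List.ofFn f).prod}

/-!
Conjugating each factor past the cosets to its left gives
`g₁h₁g₂h₂⋯gₙhₙ = (c₁h₁c₁⁻¹)(c₂h₂c₂⁻¹)⋯(cₙhₙcₙ⁻¹) · cₙ` with `cᵢ = g₁⋯gᵢ`, so `S` is the right
translate by `cₙ` of a product of the finitely generated subgroups `cᵢHᵢcᵢ⁻¹`, which lie in the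
normal subgroup `H`. That product is closed in `H` by product separability. A closed subset of
a finite-index subgroup is closed in `G`, since the inclusion is an open map with closed image,
and right translations are homeomorphisms of the profinite topology.
-/

open Topology

section

variable {G : Type*} [Group G]

theorem Subgroup.FG.map {G' : Type*} [Group G'] {K : Subgroup G} (hK : K.FG) (f : G →* G') :
    (K.map f).FG := by
  classical
  obtain ⟨S, rfl⟩ := hK
  exact ⟨S.image f, by rw [Finset.coe_image, MonoidHom.map_closure]⟩

theorem Subgroup.FG.subgroupOf {K H : Subgroup G} (hK : K.FG) (hKH : K ≤ H) :
    (K.subgroupOf H).FG := by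
  rw [← Group.fg_iff_subgroup_fg] at hK ⊢
  exact Group.fg_of_surjective (f := (Subgroup.subgroupOfEquivOfLe hKH).symm.toMonoidHom)
    (MulEquiv.surjective _)

theorem list_prod_ofFn_mul_eq {n : ℕ} (g f : Fin n → G) :
    (List.ofFn fun i => g i * f i).prod =
      (List.ofFn fun i => Fin.partialProd g i.succ * f i * (Fin.partialProd g i.succ)⁻¹).prod *
        Fin.partialProd g (Fin.last n) := by
  induction n with
  | zero => simp
  | succ n ih =>
    have h := ih (Fin.init g) (Fin.init f)
    simp only [Fin.partialProd_init, Fin.init, ← Fin.succ_castSucc] at h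
    rw [List.ofFn_succ', List.ofFn_succ', List.prod_concat, List.prod_concat, h,
      ← Fin.succ_last, Fin.partialProd_succ]
    group

def productSet {n : ℕ} (K : Fin n → Subgroup G) : Set G :=
  {x | ∃ f : Fin n → G, (∀ i, f i ∈ K i) ∧ x = (List.ofFn f).prod}

theorem productSet_eq_image_subtype_val {n : ℕ} {H : Subgroup G} (K : Fin n → Subgroup G)
    (hK : ∀ i, K i ≤ H) :
    productSet K = ((↑) : H → G) '' productSet fun i => (K i).subgroupOf H := by
  ext x
  constructor
  · rintro ⟨f, hf, rfl⟩
    refine ⟨(List.ofFn fun i => (⟨f i, hK i (hf i)⟩ : H)).prod, ⟨_, fun i => hf i, rfl⟩, ?_⟩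
    simp [List.map_ofFn, Function.comp_def]
  · rintro ⟨_, ⟨e, he, rfl⟩, rfl⟩
    exact ⟨fun i => e i, he, by simp [List.map_ofFn, Function.comp_def]⟩

def cosetProductSet {n : ℕ} (g : Fin n → G) (K : Fin n → Subgroup G) : Set G :=
  {x | ∃ f : Fin n → G, (∀ i, f i ∈ K i) ∧ x = (List.ofFn fun i => g i * f i).prod}

theorem cosetProductSet_eq_image_mul_right {n : ℕ} (g : Fin n → G) (K : Fin n → Subgroup G) :
    cosetProductSet g K = (· * Fin.partialProd g (Fin.last n)) ''
      productSet fun i => (K i).map (MulAut.conj (Fin.partialProd g i.succ)).toMonoidHom := by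
  ext x
  constructor
  · rintro ⟨f, hf, rfl⟩
    exact ⟨_, ⟨_, fun i => Subgroup.mem_map_of_mem _ (hf i), rfl⟩, (list_prod_ofFn_mul_eq g f).symm⟩
  · rintro ⟨_, ⟨e, he, rfl⟩, rfl⟩
    choose f hf hfe using fun i => Subgroup.mem_map.mp (he i)
    obtain rfl : e = _ := funext fun i => (hfe i).symm
    exact ⟨f, hf, (list_prod_ofFn_mul_eq g f).symm⟩

namespace profiniteTopology

theorem isOpen_image_mul_left (K : Subgroup G) [K.FiniteIndex] (a : G) :
    IsOpen[profiniteTopology G] ((a * ·) '' (K : Set G)) :=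
  TopologicalSpace.isOpen_generateFrom_of_mem ⟨K, a, ‹_›, rfl⟩

theorem isClosed_subgroup (K : Subgroup G) [K.FiniteIndex] :
    IsClosed[profiniteTopology G] (K : Set G) := by
  let := profiniteTopology G
  have hcompl : (K : Set G)ᶜ = ⋃ a ∈ (K : Set G)ᶜ, (a * ·) '' (K : Set G) := by
    ext x
    simp only [Set.mem_compl_iff, Set.mem_iUnion, Set.image_mul_left, Set.mem_preimage,
      SetLike.mem_coe]
    refine ⟨fun hx => ⟨x, hx, by simp⟩, ?_⟩
    rintro ⟨a, ha, hax⟩ hx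
    exact ha (by simpa using K.mul_mem hx (K.inv_mem hax))
  rw [← isOpen_compl_iff, hcompl]
  exact isOpen_biUnion fun a _ => isOpen_image_mul_left K a

theorem continuous_mul_right (b : G) :
    Continuous[profiniteTopology G, profiniteTopology G] (· * b) := by
  let := profiniteTopology G
  refine continuous_generateFrom_iff.mpr ?_
  rintro _ ⟨K, a, hK, rfl⟩
  let L := K.comap (MulAut.conj b⁻¹).toMonoidHom
  have : L.FiniteIndex :=
    ⟨(K.index_comap_of_surjective (MulEquiv.surjective _)).trans_ne hK.index_ne_zero⟩
  convert isOpen_image_mul_left L (a * b⁻¹) using 1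
  ext x
  simp only [Set.image_mul_left, Set.mem_preimage, SetLike.mem_coe, L, Subgroup.mem_comap,
    MulEquiv.coe_toMonoidHom, MulAut.conj_apply]
  group

theorem isClosed_image_mul_right {T : Set G} (hT : IsClosed[profiniteTopology G] T) (b : G) :
    IsClosed[profiniteTopology G] ((· * b) '' T) := by
  let := profiniteTopology G
  rw [Set.image_mul_right]
  exact hT.preimage (continuous_mul_right b⁻¹)

theorem isOpen_image_subtype_val (H : Subgroup G) [H.FiniteIndex] {U : Set H}
    (hU : IsOpen[profiniteTopology H] U) :
    IsOpen[profiniteTopology G] (((↑) : H → G) '' U) := by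
  let := profiniteTopology G
  induction hU with
  | basic _ hU =>
    obtain ⟨K, a, hK, rfl⟩ := hU
    have : (K.map H.subtype).FiniteIndex :=
      ⟨by rw [Subgroup.index_map_subtype]
          exact mul_ne_zero hK.index_ne_zero ‹H.FiniteIndex›.index_ne_zero⟩
    convert isOpen_image_mul_left (K.map H.subtype) (a : G) using 1
    rw [Subgroup.coe_map, Set.image_image, Set.image_image]
    rfl
  | univ => simpa using isOpen_image_mul_left H 1
  | inter _ _ _ _ hs ht =>
    rw [Set.image_inter Subtype.val_injective]
    exact hs.inter ht
  | sUnion _ _ h =>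
    rw [Set.image_sUnion, Set.sUnion_image]
    exact isOpen_biUnion h

theorem isClosed_image_subtype_val (H : Subgroup G) [H.FiniteIndex] {T : Set H}
    (hT : IsClosed[profiniteTopology H] T) :
    IsClosed[profiniteTopology G] (((↑) : H → G) '' T) := by
  let := profiniteTopology G
  have : ((↑) : H → G) '' T = Set.range ((↑) : H → G) \ ((↑) : H → G) '' Tᶜ := by
    rw [Set.image_compl_eq_range_sdiff_image Subtype.val_injective,
      Set.sdiff_sdiff_cancel_left (Set.image_subset_range _ _)]
  rw [this, Subtype.range_coe]
  exact (isClosed_subgroup H).sdiff (isOpen_image_subtype_val H hT.isOpen_compl)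

end profiniteTopology

end

/-- If `H` is a normal finite-index product-separable subgroup of `G`, `H₁, …, Hₙ` are
finitely generated subgroups of `H` and `g₁, …, gₙ ∈ G`, then the set
`g₁H₁g₂H₂⋯gₙHₙ` is closed in the profinite topology on `G`. -/
theorem coset_product_closed {G : Type*} [Group G] (H : Subgroup G) (hnorm : H.Normal)
    (hfi : H.FiniteIndex) (hps : ProductSeparable ↥H)
    (n : ℕ) (Hs : Fin n → Subgroup G) (hle : ∀ i, Hs i ≤ H) (hfg : ∀ i, (Hs i).FG)
    (g : Fin n → G) :
    @IsClosed G (profiniteTopology G)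
      {x : G | ∃ f : Fin n → G, (∀ i, f i ∈ Hs i) ∧
        x = (List.ofFn (fun i => g i * f i)).prod} := by
  have hconj_le (i : Fin n) :
      (Hs i).map (MulAut.conj (Fin.partialProd g i.succ)).toMonoidHom ≤ H := by
    rintro _ ⟨y, hy, rfl⟩
    exact hnorm.conj_mem y (hle i hy) _
  change IsClosed[profiniteTopology G] (cosetProductSet g Hs)
  rw [cosetProductSet_eq_image_mul_right, productSet_eq_image_subtype_val _ hconj_le]
  have hprod_closed := hps n _ fun i => ((hfg i).map _).subgroupOf (hconj_le i)
  exact profiniteTopology.isClosed_image_mul_right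
    (profiniteTopology.isClosed_image_subtype_val H hprod_closed) _
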